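/- Let $B$ be a $\mathbf{k}$-bialgebra and $b \in B$ an id-unipotent element with degree-upper bound $m \geq 0$. Then in the power series ring $B[[t]]$, we have $(1-t)^{m+1} \sum_{k \in \mathbb{N}} \mathrm{id}^{\circledast k}(b)\, t^k = \sum_{k=0}^m (-1)^k (\eta\epsilon - \mathrm{id})^{\circledast k}(b)\, t^k (1-t)^{m-k}$. -/

import Mathlib

open TensorProduct

variable (k : Type*) [CommRing k] (B : Type*) [Ring B] [Bialgebra k B]

/-- The convolution product `f ⊛ g = μ ∘ (f ⊗ g) ∘ Δ` on `k`-linear maps `B → B`. -/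
noncomputable def conv (f g : B →ₗ[k] B) : B →ₗ[k] B :=
  LinearMap.mul' k B ∘ₗ TensorProduct.map f g ∘ₗ Coalgebra.comul

/-- The unit `η ∘ ε` of the convolution algebra. -/
noncomputable def convOne : B →ₗ[k] B :=
  (Algebra.linearMap k B) ∘ₗ Coalgebra.counit

/-- Convolution powers: `f^{⊛ 0} = η ∘ ε` and `f^{⊛ (n+1)} = f^{⊛ n} ⊛ f`. -/
noncomputable def convPow : ℕ → (B →ₗ[k] B) → (B →ₗ[k] B)
  | 0, _ => convOne k B
  | n + 1, f => conv k B (convPow n f) f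

/-- `m` is a degree-upper bound of `b` if `(ηε - id)^{⊛ n} (b) = 0` for every
nonnegative integer `n > m`. -/
def IsDegreeUpperBound (m : ℤ) (b : B) : Prop :=
  ∀ n : ℕ, m < (n : ℤ) → convPow k B n (convOne k B - LinearMap.id) b = 0

variable {k B}

lemma conv_one_mul (f : B →ₗ[k] B) : conv k B (convOne k B) f = f := by
  ext b
  have h1 : TensorProduct.map (convOne k B) f =
      TensorProduct.map (Algebra.linearMap k B) f ∘ₗ
        LinearMap.rTensor B (Coalgebra.counit (R := k) (A := B)) := by
    rw [convOne, LinearMap.rTensor, ← TensorProduct.map_comp, LinearMap.comp_id]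
  simp only [conv, LinearMap.comp_apply, h1, Coalgebra.rTensor_counit_comul,
    TensorProduct.map_tmul, LinearMap.mul'_apply, Algebra.linearMap_apply, map_one, one_mul,
    LinearMap.id_apply]

lemma conv_mul_one (f : B →ₗ[k] B) : conv k B f (convOne k B) = f := by
  ext b
  have h1 : TensorProduct.map f (convOne k B) =
      TensorProduct.map f (Algebra.linearMap k B) ∘ₗ
        LinearMap.lTensor B (Coalgebra.counit (R := k) (A := B)) := by
    rw [convOne, LinearMap.lTensor, ← TensorProduct.map_comp, LinearMap.comp_id]
  simp only [conv, LinearMap.comp_apply, h1, Coalgebra.lTensor_counit_comul,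
    TensorProduct.map_tmul, LinearMap.mul'_apply, Algebra.linearMap_apply, map_one, mul_one,
    LinearMap.id_apply]

lemma conv_assoc (f g h : B →ₗ[k] B) :
    conv k B (conv k B f g) h = conv k B f (conv k B g h) := by
  ext b
  have hmul : (LinearMap.mul' k B) ∘ₗ LinearMap.rTensor B (LinearMap.mul' k B) =
      (LinearMap.mul' k B) ∘ₗ LinearMap.lTensor B (LinearMap.mul' k B) ∘ₗ
        (TensorProduct.assoc k B B B).toLinearMap := by
    apply TensorProduct.ext_threefold
    intro a b c
    simp [mul_assoc]
  have hmul' : ∀ x : (B ⊗[k] B) ⊗[k] B,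
      LinearMap.mul' k B (LinearMap.rTensor B (LinearMap.mul' k B) x) =
      LinearMap.mul' k B (LinearMap.lTensor B (LinearMap.mul' k B)
        (TensorProduct.assoc k B B B x)) := by
    intro x
    have := DFunLike.congr_fun hmul x
    simpa using this
  have hL : TensorProduct.map (conv k B f g) h =
      LinearMap.rTensor B (LinearMap.mul' k B) ∘ₗ
        TensorProduct.map (TensorProduct.map f g) h ∘ₗ
          LinearMap.rTensor B (Coalgebra.comul (R := k)) := by
    rw [conv, LinearMap.rTensor, LinearMap.rTensor, ← TensorProduct.map_comp,
      ← TensorProduct.map_comp]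
    simp [LinearMap.comp_id, LinearMap.id_comp]
  have hR : TensorProduct.map f (conv k B g h) =
      LinearMap.lTensor B (LinearMap.mul' k B) ∘ₗ
        TensorProduct.map f (TensorProduct.map g h) ∘ₗ
          LinearMap.lTensor B (Coalgebra.comul (R := k)) := by
    rw [conv, LinearMap.lTensor, LinearMap.lTensor, ← TensorProduct.map_comp,
      ← TensorProduct.map_comp]
    simp [LinearMap.comp_id, LinearMap.id_comp]
  show LinearMap.mul' k B (TensorProduct.map (conv k B f g) h (Coalgebra.comul b)) =
    LinearMap.mul' k B (TensorProduct.map f (conv k B g h) (Coalgebra.comul b))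
  rw [hL, hR]
  simp only [LinearMap.comp_apply]
  rw [hmul', ← TensorProduct.map_map_assoc, Coalgebra.coassoc_apply]

lemma conv_add_left (f g h : B →ₗ[k] B) :
    conv k B (f + g) h = conv k B f h + conv k B g h := by
  simp only [conv, TensorProduct.map_add_left]
  ext b; simp

lemma conv_add_right (f g h : B →ₗ[k] B) :
    conv k B f (g + h) = conv k B f g + conv k B f h := by
  simp only [conv, TensorProduct.map_add_right]
  ext b; simp

lemma conv_zero_left (f : B →ₗ[k] B) : conv k B 0 f = 0 := by
  simp only [conv, TensorProduct.map_zero_left]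
  ext b; simp

lemma conv_zero_right (f : B →ₗ[k] B) : conv k B f 0 = 0 := by
  simp only [conv, TensorProduct.map_zero_right]
  ext b; simp

/-- Type synonym for `B →ₗ[k] B` carrying the convolution ring structure. -/
def ConvAlg (k B : Type*) [CommRing k] [Ring B] [Bialgebra k B] := B →ₗ[k] B

instance : AddCommGroup (ConvAlg k B) := inferInstanceAs (AddCommGroup (B →ₗ[k] B))

noncomputable instance : Ring (ConvAlg k B) :=
  { (inferInstance : AddCommGroup (ConvAlg k B)) with
    mul := conv k B
    one := convOne k B
    mul_assoc := conv_assoc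
    one_mul := conv_one_mul
    mul_one := conv_mul_one
    left_distrib := conv_add_right
    right_distrib := fun f g h => conv_add_left f g h
    zero_mul := conv_zero_left
    mul_zero := conv_zero_right }

/-- Identity map into the convolution algebra. -/
def ConvAlg.of (f : B →ₗ[k] B) : ConvAlg k B := f

lemma convPow_eq_pow (n : ℕ) (f : B →ₗ[k] B) :
    ConvAlg.of (convPow k B n f) = (ConvAlg.of f) ^ n := by
  induction n with
  | zero => rw [pow_zero]; rfl
  | succ n ih => rw [pow_succ, ← ih]; rfl

lemma ring_binom {R : Type*} [Ring R] (g : R) (n : ℕ) :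
    (1 - g) ^ n = ∑ j ∈ Finset.range (n + 1),
      ((-1 : ℤ) ^ j * (n.choose j : ℤ)) • g ^ j := by
  rw [sub_eq_add_neg, add_comm, (Commute.one_right (-g)).add_pow]
  refine Finset.sum_congr rfl fun j hj => ?_
  rw [one_pow, mul_one, neg_pow, zsmul_eq_mul]
  push_cast
  rw [mul_assoc, mul_assoc, ← (Nat.cast_commute (n.choose j) (g ^ j)).eq]

/-- Binomial expansion of `id^{⊛n}(b)` in terms of `g = ηε - id`. -/
lemma convPow_id_apply (n : ℕ) (b : B) :
    convPow k B n LinearMap.id b =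
      ∑ j ∈ Finset.range (n + 1),
        ((-1 : ℤ) ^ j * (n.choose j : ℤ)) •
          convPow k B j (convOne k B - LinearMap.id) b := by
  have hid : ConvAlg.of (LinearMap.id : B →ₗ[k] B) =
      1 - ConvAlg.of (convOne k B - LinearMap.id) := by
    have h : (LinearMap.id : B →ₗ[k] B) = convOne k B - (convOne k B - LinearMap.id) :=
      (sub_sub_cancel _ _).symm
    exact h
  have key : ConvAlg.of (convPow k B n LinearMap.id) =
      ∑ j ∈ Finset.range (n + 1),
        ((-1 : ℤ) ^ j * (n.choose j : ℤ)) •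
          ConvAlg.of (convPow k B j (convOne k B - LinearMap.id)) := by
    rw [convPow_eq_pow, hid, ring_binom]
    exact Finset.sum_congr rfl fun j _ => by rw [convPow_eq_pow]
  have key' : (convPow k B n LinearMap.id : B →ₗ[k] B) =
      ∑ j ∈ Finset.range (n + 1),
        ((-1 : ℤ) ^ j * (n.choose j : ℤ)) •
          (convPow k B j (convOne k B - LinearMap.id) : B →ₗ[k] B) := key
  rw [key']
  simp only [LinearMap.sum_apply, LinearMap.smul_apply]

lemma key_ps (j : ℕ) (v : B) :
    (1 - PowerSeries.X) ^ (j + 1) * PowerSeries.mk (fun n => n.choose j • v) =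
      PowerSeries.C v * PowerSeries.X ^ j := by
  induction j with
  | zero =>
    rw [pow_one, pow_zero, mul_one, sub_mul, one_mul]
    ext n
    cases n with
    | zero => simp
    | succ n => simp [PowerSeries.coeff_succ_X_mul]
  | succ j ih =>
    have hstep : (1 - PowerSeries.X) * PowerSeries.mk (fun n => n.choose (j + 1) • v) =
        PowerSeries.X * PowerSeries.mk (fun n => n.choose j • v) := by
      rw [sub_mul, one_mul]
      ext n
      cases n with
      | zero => simp
      | succ n =>
        simp [PowerSeries.coeff_succ_X_mul, Nat.choose_succ_succ, add_smul, add_mul, add_sub_cancel_right]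
    rw [pow_succ, mul_assoc, hstep, ← mul_assoc,
      ((PowerSeries.commute_X (((1 - PowerSeries.X) ^ (j + 1) : PowerSeries B))).eq), mul_assoc,
      ih, ← mul_assoc, ← ((PowerSeries.commute_X (PowerSeries.C v)).eq), mul_assoc,
      ← pow_succ']

lemma mk_sum {ι : Type*} (s : Finset ι) (f : ι → ℕ → B) :
    PowerSeries.mk (fun n => ∑ i ∈ s, f i n) = ∑ i ∈ s, PowerSeries.mk (f i) := by
  ext n
  simp

lemma mk_zsmul (z : ℤ) (f : ℕ → B) :
    PowerSeries.mk (fun n => z • f n) = z • PowerSeries.mk f := by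
  ext n
  rw [PowerSeries.coeff_mk, map_zsmul, PowerSeries.coeff_mk]

variable (k B)

/-- **Theorem.** If `b` is an id-unipotent element of a `k`-bialgebra `B` with degree-upper
bound `m ≥ 0`, then in `B[[t]]` we have
`(1-t)^{m+1} ∑_k id^{⊛ k}(b) t^k = ∑_{k=0}^m (-1)^k (ηε - id)^{⊛ k}(b) t^k (1-t)^{m-k}`. -/
theorem stmt7 (b : B) (m : ℕ) (hm : IsDegreeUpperBound k B (m : ℤ) b) :
    (1 - PowerSeries.X) ^ (m + 1) *
      PowerSeries.mk (fun n => convPow k B n (LinearMap.id) b) =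
    ∑ j ∈ Finset.range (m + 1),
      (-1 : PowerSeries B) ^ j *
        PowerSeries.C (convPow k B j (convOne k B - LinearMap.id) b) *
        PowerSeries.X ^ j * (1 - PowerSeries.X) ^ (m - j) := by
  set v : ℕ → B := fun j => convPow k B j (convOne k B - LinearMap.id) b with hv
  have hcoeff : ∀ n, convPow k B n LinearMap.id b =
      ∑ j ∈ Finset.range (m + 1), ((-1 : ℤ) ^ j * (n.choose j : ℤ)) • v j := by
    intro n
    rw [convPow_id_apply]
    rcases le_total (n + 1) (m + 1) with h | h
    · refine Finset.sum_subset (Finset.range_subset_range.2 h) fun j _ hj => ?_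
      have hn : n < j := by simpa using hj
      simp [Nat.choose_eq_zero_of_lt hn]
    · refine (Finset.sum_subset (Finset.range_subset_range.2 h) fun j _ hj => ?_).symm
      have hj' : m < j := by simpa using hj
      have h0 : (convPow k B j (convOne k B - LinearMap.id)) b = 0 :=
        hm j (by exact_mod_cast hj')
      simp [v, h0]
  rw [show (PowerSeries.mk fun n => convPow k B n LinearMap.id b) =
      PowerSeries.mk (fun n => ∑ j ∈ Finset.range (m + 1),
        ((-1 : ℤ) ^ j * (n.choose j : ℤ)) • v j) from congrArg _ (funext hcoeff)]
  rw [mk_sum, Finset.mul_sum]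
  refine Finset.sum_congr rfl fun j hj => ?_
  have hjm : j ≤ m := Nat.lt_succ_iff.mp (Finset.mem_range.mp hj)
  have hsplit : ∀ n : ℕ, ((-1 : ℤ) ^ j * (n.choose j : ℤ)) • v j =
      ((-1 : ℤ) ^ j) • ((n.choose j) • v j) := by
    intro n
    rw [mul_smul, natCast_zsmul]
  rw [show (fun n : ℕ => ((-1 : ℤ) ^ j * (n.choose j : ℤ)) • v j) =
      (fun n : ℕ => ((-1 : ℤ) ^ j) • ((n.choose j) • v j)) from funext hsplit]
  rw [mk_zsmul, mul_smul_comm]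
  have hpow : (1 - PowerSeries.X : PowerSeries B) ^ (m + 1) =
      (1 - PowerSeries.X) ^ (m - j) * (1 - PowerSeries.X) ^ (j + 1) := by
    rw [← pow_add]
    congr 1
    omega
  rw [hpow, mul_assoc, key_ps]
  have hc1 : Commute (1 - PowerSeries.X : PowerSeries B) (PowerSeries.C (v j)) :=
    (Commute.one_left _).sub_left (PowerSeries.commute_X (PowerSeries.C (v j))).symm
  have hc2 : Commute (1 - PowerSeries.X : PowerSeries B) (PowerSeries.X : PowerSeries B) :=
    PowerSeries.commute_X _
  have hc : Commute ((1 - PowerSeries.X : PowerSeries B) ^ (m - j))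
      (PowerSeries.C (v j) * PowerSeries.X ^ j) :=
    ((hc1.mul_right (hc2.pow_right j)).pow_left (m - j))
  rw [hc.eq, zsmul_eq_mul]
  push_cast
  rw [← mul_assoc, ← mul_assoc]
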